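/- arXiv:1908.02721 — 4 statements merged into one kernel-verified Lean document; each statement's English description precedes it below -/
import Mathlib

section
/- Every quasi-permutation matrix M ∈ ℝ^{n₁×n₂} can be factored as M = N·T where N ∈ ℝ^{n₁×β} is a quasi-permutation matrix with pairwise distinct columns (hence orthonormal), T ∈ ℝ^{β×n₂} is a quasi-permutation matrix, and β ≤ min(n₁, n₂) equals the number of distinct columns of M. -/
open Matrix

/-- A matrix is a quasi-permutation matrix if each of its columns is a standard
basis vector. -/
def IsQuasiPerm {I J : Type*} [DecidableEq I] (M : Matrix I J ℝ) : Prop :=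
  ∀ j, ∃ i₀, ∀ i, M i j = if i = i₀ then 1 else 0

/-- Every quasi-permutation matrix `M ∈ ℝ^{n₁×n₂}` factors as
`M = N·T` with `N` a quasi-permutation matrix having pairwise distinct columns
(hence orthonormal), `T` a quasi-permutation matrix, and
`β ≤ min n₁ n₂` equal to the number of distinct columns of `M`. -/
theorem quasi_perm_dedup_factorization
    (n₁ n₂ : ℕ) (M : Matrix (Fin n₁) (Fin n₂) ℝ) (hM : IsQuasiPerm M) :
    ∃ (β : ℕ) (N : Matrix (Fin n₁) (Fin β) ℝ) (T : Matrix (Fin β) (Fin n₂) ℝ),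
      M = N * T ∧
      IsQuasiPerm N ∧
      (∀ b b', (∀ x, N x b = N x b') → b = b') ∧
      Nᵀ * N = 1 ∧
      IsQuasiPerm T ∧
      β ≤ min n₁ n₂ ∧
      β = (Set.range fun j => fun x => M x j).ncard := by
  choose f hf using hM
  set s : Finset (Fin n₁) := Finset.univ.image f with hs
  set β := s.card with hβ
  set g : Fin β → Fin n₁ := fun b => (s.equivFin.symm b : Fin n₁) with hg
  have hginj : Function.Injective g := fun a b h => by
    have := s.equivFin.symm.injective (Subtype.ext h)
    exact this
  have hmem : ∀ j, f j ∈ s := fun j => Finset.mem_image_of_mem f (Finset.mem_univ j)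
  set t : Fin n₂ → Fin β := fun j => s.equivFin ⟨f j, hmem j⟩ with ht
  have hgt : ∀ j, g (t j) = f j := fun j => by simp [hg, ht]
  refine ⟨β, fun x b => if x = g b then 1 else 0,
    fun b j => if t j = b then 1 else 0, ?_, ?_, ?_, ?_, ?_, ?_, ?_⟩
  · ext x j
    change M x j = ∑ b, (if x = g b then (1:ℝ) else 0) * (if t j = b then 1 else 0)
    rw [hf j x]
    rw [Finset.sum_eq_single (t j)]
    · simp [hgt j]
    · intro b _ hb; simp [hb.symm]
    · simp
  · intro b; exact ⟨g b, fun i => rfl⟩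
  · intro b b' h
    have := h (g b)
    simp only [if_pos rfl] at this
    by_cases hbe : g b = g b'
    · exact hginj hbe
    · simp [hbe] at this
  · ext b b'
    change ∑ x, (if x = g b then (1:ℝ) else 0) * (if x = g b' then 1 else 0) = (1 : Matrix (Fin β) (Fin β) ℝ) b b'
    rw [Finset.sum_eq_single (g b)]
    · by_cases hbe : b = b'
      · simp [hbe, Matrix.one_apply]
      · have : g b ≠ g b' := fun h => hbe (hginj h)
        simp [Matrix.transpose_apply, this, Matrix.one_apply, hbe]
    · intro x _ hx; simp [Matrix.transpose_apply, hx]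
    · simp
  · intro j; exact ⟨t j, fun b => by simp [eq_comm]⟩
  · refine le_min ?_ ?_
    · exact le_trans (Finset.card_le_card (Finset.subset_univ s)) (by simp)
    · exact le_trans (Finset.card_image_le) (by simp)
  · have hcol : (fun j => fun x => M x j) = (fun (i : Fin n₁) => fun (x : Fin n₁) => if x = i then (1:ℝ) else 0) ∘ f := by
      funext j; funext x; rw [hf j x]; rfl
    have heinj : Function.Injective (fun (i : Fin n₁) => fun (x : Fin n₁) => if x = i then (1:ℝ) else 0) := by
      intro a b h
      by_contra hab
      have := congrFun h a
      simp [hab] at this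
    rw [hcol, Set.range_comp, Set.ncard_image_of_injective _ heinj,
      ← Set.image_univ, ← Finset.coe_univ, ← Finset.coe_image, Set.ncard_coe_finset]
end

section
/- Orthogonal error splitting in a truncated SVD sweep: suppose A⁽ᵖ⁾ = C⁽ᵖ⁾·(ΣVᵀ) + E where the columns of the unfolding of C⁽ᵖ⁾ are orthonormal and the unfolding of E is orthogonal to the column span of the unfolding of C⁽ᵖ⁾ (i.e., C⁽ᵖ⁾ᵀE = 0 in unfolded form). Then for any tensors X, Y of compatible sizes, ‖A⁽ᵖ⁾∘X − C⁽ᵖ⁾∘Y‖_F² = ‖E∘X‖_F² + ‖C⁽ᵖ⁾∘((ΣVᵀ·X) − Y)‖_F², where ∘ denotes contraction along the last/first mode. -/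
open Matrix

/-- Squared Frobenius norm of a matrix. -/
def frobSq {I J : Type*} [Fintype I] [Fintype J] (A : Matrix I J ℝ) : ℝ :=
  ∑ i, ∑ j, (A i j) ^ 2

/-! Writing `Ap·X − C·Y = E·X + C·(M·X − Y)`, the two summands have orthogonal columns because
`(E·X)ᵀ·C = Xᵀ·(Cᵀ·E)ᵀ = 0`, so Pythagoras for the Frobenius inner product `⟨A, B⟩ = tr (AᵀB)`
splits the squared norm. -/

section FrobeniusPythagoras

variable {I J : Type*} [Fintype I] [Fintype J]

lemma frobSq_eq_trace_transpose_mul [DecidableEq J] (A : Matrix I J ℝ) :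
    frobSq A = (Aᵀ * A).trace := by
  rw [frobSq, Finset.sum_comm]
  simp [Matrix.trace, Matrix.mul_apply, sq]

lemma frobSq_add_of_transpose_mul_eq_zero {A B : Matrix I J ℝ} (h : Aᵀ * B = 0) :
    frobSq (A + B) = frobSq A + frobSq B := by
  classical
  have h' : Bᵀ * A = 0 := by
    rw [← transpose_transpose (Bᵀ * A), transpose_mul, transpose_transpose, h, transpose_zero]
  simp only [frobSq_eq_trace_transpose_mul, transpose_add, Matrix.add_mul, Matrix.mul_add, h, h',
    add_zero, zero_add, trace_add]

end FrobeniusPythagoras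

theorem orthogonal_error_splitting_general
    (N s r q : ℕ)
    (Ap : Matrix (Fin N) (Fin s) ℝ)
    (C : Matrix (Fin N) (Fin r) ℝ)
    (M : Matrix (Fin r) (Fin s) ℝ)
    (E : Matrix (Fin N) (Fin s) ℝ)
    (hCE : Cᵀ * E = 0) (hAp : Ap = C * M + E)
    (X : Matrix (Fin s) (Fin q) ℝ) (Y : Matrix (Fin r) (Fin q) ℝ) :
    frobSq (Ap * X - C * Y) = frobSq (E * X) + frobSq (C * (M * X - Y)) := by
  have hsplit : Ap * X - C * Y = E * X + C * (M * X - Y) := by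
    rw [hAp, Matrix.add_mul, Matrix.mul_sub, Matrix.mul_assoc]
    abel
  have horth : (E * X)ᵀ * (C * (M * X - Y)) = 0 := by
    have hEC : Eᵀ * C = 0 := by rw [← transpose_transpose C, ← transpose_mul, hCE, transpose_zero]
    rw [transpose_mul, Matrix.mul_assoc, ← Matrix.mul_assoc Eᵀ, hEC, Matrix.zero_mul,
      Matrix.mul_zero]
  rw [hsplit, frobSq_add_of_transpose_mul_eq_zero horth]

/-- Orthogonal error splitting in a truncated SVD sweep
(unfolded form): if `Ap = C·M + E` where the columns of `C` are orthonormal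
(`CᵀC = I`, here `C` is the unfolding of the core `C⁽ᵖ⁾` and `M = ΣVᵀ`) and `E`
is orthogonal to the column span of `C` (`CᵀE = 0`), then for all compatible
`X`, `Y`:
`‖Ap·X − C·Y‖_F² = ‖E·X‖_F² + ‖C·(M·X − Y)‖_F²`. -/
theorem orthogonal_error_splitting
    (N s r q : ℕ)
    (Ap : Matrix (Fin N) (Fin s) ℝ)
    (C : Matrix (Fin N) (Fin r) ℝ)
    (M : Matrix (Fin r) (Fin s) ℝ)
    (E : Matrix (Fin N) (Fin s) ℝ)
    (hC : Cᵀ * C = 1) (hCE : Cᵀ * E = 0) (hAp : Ap = C * M + E)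
    (X : Matrix (Fin s) (Fin q) ℝ) (Y : Matrix (Fin r) (Fin q) ℝ) :
    frobSq (Ap * X - C * Y) = frobSq (E * X) + frobSq (C * (M * X - Y)) :=
  orthogonal_error_splitting_general N s r q Ap C M E hCE hAp X Y
end

section
/- Upper bound on TT ranks after parallel-vector rounding: let A ∈ ℝ^{n₁×⋯×n_d} have R nonzero p-fibers and let the TT obtained by Algorithm FastTT's lossless conversion have ranks r̃₀,…,r̃_d. Then r̃_k ≤ min(R, ∏_{i=1}^{k} n_i) for 1 ≤ k < p and r̃_k ≤ min(R, ∏_{i=k+1}^{d} n_i) for p ≤ k < d. -/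
/-- Evaluation of a chain (matrix product) of TT cores, encoded as ℕ-indexed matrices. -/
noncomputable def ttChain (G : ℕ → ℕ → ℕ → ℝ) (r : ℕ → ℕ) : ℕ → ℕ → ℕ → ℝ
  | 0, i, j => if i = j then 1 else 0
  | k + 1, i, j => ∑ t ∈ Finset.range (r k), ttChain G r k i t * G k t j

/-- Reconstruct a full multi-index from an index tuple on all modes except `p`
together with a value for mode `p`. -/
def glue {d : ℕ} (n : ℕ → ℕ) (p : Fin d)
    (j : (k : {k : Fin d // k ≠ p}) → Fin (n k.1.val)) (t : Fin (n p.val)) :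
    (k : Fin d) → Fin (n k.val) := fun k =>
  if h : k = p then Fin.cast (congrArg n (congrArg Fin.val h.symm)) t else j ⟨k, h⟩

/-!
Read the TT as an automaton scanning the index from left to right. At a cut left of the middle
mode `P` its state is the prefix of the index, at a cut right of `P` the suffix, and only the
prefixes and suffixes of nonzero entries of `A` are kept. Left cores append a coordinate to the
prefix, right cores split one off the suffix, and the middle core reads off the entry of `A` with
the given prefix, coordinate at `P` and suffix. The partial chain up to a cut `c ≤ P` is then the
indicator of the prefix of the index, and beyond `P` it is the sum of `A` over the indices with
the prefix of the index and the given suffix, which is `A` itself at the last cut. The states at a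
cut are restrictions of the nonzero `p`-fibers, so there are at most `R` of them, and at most as
many as there are index tuples on the prefix or suffix.
-/

open Finset Function

section StateChain

variable {σ : Type*}

noncomputable def Finset.enum (T : Finset σ) (s₀ : σ) (x : ℕ) : σ :=
  if h : x < T.card then T.equivFin.symm ⟨x, h⟩ else s₀

theorem Finset.enum_mem {T : Finset σ} (s₀ : σ) {x : ℕ} (hx : x < T.card) :
    T.enum s₀ x ∈ T := by
  simp only [Finset.enum, dif_pos hx, coe_mem]

theorem Finset.sum_range_enum (T : Finset σ) (s₀ : σ) (f : σ → ℝ) :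
    ∑ x ∈ range T.card, f (T.enum s₀ x) = ∑ s ∈ T, f s := by
  rw [Finset.sum_range, ← T.sum_coe_sort f, ← T.equivFin.symm.sum_comp]
  refine sum_congr rfl fun x _ => ?_
  simp only [Finset.enum, dif_pos x.isLt]

noncomputable def stateChain [DecidableEq σ] (T : ℕ → Finset σ) (M : ℕ → σ → σ → ℝ) (s₀ : σ) :
    ℕ → σ → ℝ
  | 0, s => if s = s₀ then 1 else 0
  | c + 1, s' => ∑ s ∈ T c, stateChain T M s₀ c s * M c s s'

theorem ttChain_eq_stateChain [DecidableEq σ] (T : ℕ → Finset σ) (M : ℕ → σ → σ → ℝ) {s₀ : σ}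
    (hT : T 0 = {s₀}) (G : ℕ → ℕ → ℕ → ℝ)
    (hG : ∀ c x y, G c x y = M c ((T c).enum s₀ x) ((T (c + 1)).enum s₀ y)) :
    ∀ c, ∀ y < (T c).card,
      ttChain G (fun c => (T c).card) c 0 y = stateChain T M s₀ c ((T c).enum s₀ y)
  | 0, y, hy => by
    have hy0 : y = 0 := by simpa [hT] using hy
    have hs₀ : (T 0).enum s₀ 0 = s₀ := by simpa [hT] using (T 0).enum_mem s₀ (hy0 ▸ hy)
    simp [ttChain, stateChain, hy0, hs₀]
  | c + 1, y, _ => by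
    simp only [ttChain, stateChain, hG]
    rw [← (T c).sum_range_enum s₀]
    exact sum_congr rfl fun x hx =>
      by rw [ttChain_eq_stateChain T M hT G hG c x (mem_range.1 hx)]

theorem ttChain_zero (r : ℕ → ℕ) {m : ℕ} (hm : 0 < m) (i j : ℕ) :
    ttChain (fun _ _ _ => 0) r m i j = 0 := by
  obtain ⟨m, rfl⟩ := Nat.exists_eq_add_of_lt hm
  simp [ttChain]

end StateChain

section PartialOn

variable {ι : Type*} [DecidableEq ι] {β : ι → Type*}

def partialOn (W : Finset ι) (f : ∀ i, β i) : ∀ i, Option (β i) :=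
  fun i => if i ∈ W then some (f i) else none

theorem partialOn_eq_partialOn_iff {W : Finset ι} {f g : ∀ i, β i} :
    partialOn W f = partialOn W g ↔ ∀ i ∈ W, f i = g i := by
  simp only [funext_iff, partialOn]
  refine forall_congr' fun i => ?_
  by_cases h : i ∈ W <;> simp [h]

@[simp]
theorem partialOn_empty : (partialOn ∅ : (∀ i, β i) → ∀ i, Option (β i)) = fun _ _ => none := by
  funext f i
  simp [partialOn]

theorem partialOn_insert (k : ι) (W : Finset ι) (f : ∀ i, β i) :
    partialOn (insert k W) f = update (partialOn W f) k (some (f k)) := by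
  funext i
  by_cases h : i = k
  · subst h
    simp [partialOn]
  · simp [partialOn, h]

theorem partialOn_insert_eq_partialOn_insert_iff {k : ι} {W : Finset ι} {f g : ∀ i, β i} :
    partialOn (insert k W) f = partialOn (insert k W) g ↔
      partialOn W f = partialOn W g ∧ f k = g k := by
  simp only [partialOn_eq_partialOn_iff, forall_mem_insert]
  exact and_comm

theorem partialOn_insert_eq_update_iff {k : ι} {W : Finset ι} (hk : k ∉ W) {f : ∀ i, β i}
    {s : ∀ i, Option (β i)} (hs : s k = none) {a : β k} :
    partialOn (insert k W) f = update s k (some a) ↔ f k = a ∧ partialOn W f = s := by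
  rw [partialOn_insert, update_eq_iff, funext_iff, update_self, Option.some_inj]
  refine and_congr Iff.rfl ⟨fun h i => ?_, fun h i hi => by rw [h, update_of_ne hi]⟩
  by_cases hi : i = k
  · subst hi
    simp [partialOn, hk, hs]
  · rw [h i hi, update_of_ne hi]

theorem partialOn_mem_image_of_subset {V W : Finset ι} (hVW : V ⊆ W) {s : Finset (∀ i, β i)}
    {f : ∀ i, β i} [DecidableEq (∀ i, Option (β i))]
    (hf : partialOn W f ∈ s.image (partialOn W)) : partialOn V f ∈ s.image (partialOn V) := by
  obtain ⟨g, hg, hgf⟩ := mem_image.1 hf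
  rw [partialOn_eq_partialOn_iff] at hgf
  exact mem_image.2 ⟨g, hg, partialOn_eq_partialOn_iff.2 fun i hi => hgf i (hVW hi)⟩

theorem card_image_partialOn_le_card_image_restrict [DecidableEq (∀ i, Option (β i))]
    (s : Finset (∀ i, β i)) {W : Finset ι} (q : ι → Prop) (hW : ∀ i ∈ W, q i)
    [DecidableEq (∀ i : Subtype q, β i)] :
    (s.image (partialOn W)).card ≤ (s.image fun f (i : Subtype q) => f i).card := by
  have hfactor : partialOn W = (fun (g : ∀ i : Subtype q, β i) i =>
      if h : i ∈ W then some (g ⟨i, hW i h⟩) else none) ∘ fun f i => f i := by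
    funext f i
    simp [partialOn]
  rw [hfactor, ← image_image]
  exact card_image_le

theorem card_image_partialOn_le_prod [∀ i, Fintype (β i)]
    [DecidableEq (∀ i, Option (β i))] (s : Finset (∀ i, β i)) (W : Finset ι) :
    (s.image (partialOn W)).card ≤ ∏ i ∈ W, Fintype.card (β i) := by
  classical
  calc (s.image (partialOn W)).card
      ≤ (s.image fun f (i : W) => f i).card :=
        card_image_partialOn_le_card_image_restrict s (· ∈ W) fun _ h => h
    _ ≤ Fintype.card (∀ i : W, β i) := card_le_univ _
    _ = ∏ i ∈ W, Fintype.card (β i) := by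
        rw [Fintype.card_pi]
        exact prod_coe_sort W fun i => Fintype.card (β i)

end PartialOn

section Modes

variable {d : ℕ}

def prefixModes (d c : ℕ) : Finset (Fin d) := univ.filter fun k => k.val < c

def suffixModes (d c : ℕ) : Finset (Fin d) := univ.filter fun k => c ≤ k.val

@[simp]
theorem prefixModes_zero : prefixModes d 0 = ∅ := by
  simp [prefixModes]

theorem prefixModes_self : prefixModes d d = univ := by
  simp [prefixModes]

@[simp]
theorem suffixModes_self : suffixModes d d = ∅ := by
  ext k
  simp [suffixModes]

theorem prefixModes_succ (k : Fin d) : prefixModes d (k + 1) = insert k (prefixModes d k) := by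
  ext i
  simp only [prefixModes, mem_filter, mem_univ, true_and, mem_insert, Fin.ext_iff]
  omega

theorem suffixModes_eq_insert (k : Fin d) :
    suffixModes d k = insert k (suffixModes d (k + 1)) := by
  ext i
  simp only [suffixModes, mem_filter, mem_univ, true_and, mem_insert, Fin.ext_iff]
  omega

theorem prod_prefixModes (n : ℕ → ℕ) {c : ℕ} (hc : c ≤ d) :
    ∏ k ∈ prefixModes d c, n k = ∏ i ∈ range c, n i := by
  have : (prefixModes d c).map Fin.valEmbedding = range c := by
    ext i
    simp only [prefixModes, mem_map, mem_filter, mem_univ, true_and, Fin.valEmbedding_apply,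
      mem_range]
    exact ⟨fun ⟨k, hk, hki⟩ => hki ▸ hk, fun hi => ⟨⟨i, by omega⟩, hi, rfl⟩⟩
  rw [← this, prod_map]
  rfl

theorem prod_suffixModes (n : ℕ → ℕ) (c : ℕ) :
    ∏ k ∈ suffixModes d c, n k = ∏ i ∈ Ico c d, n i := by
  have : (suffixModes d c).map Fin.valEmbedding = Ico c d := by
    ext i
    simp only [suffixModes, mem_map, mem_filter, mem_univ, true_and, Fin.valEmbedding_apply,
      mem_Ico]
    exact ⟨fun ⟨k, hk, hki⟩ => hki ▸ ⟨hk, k.isLt⟩, fun hi => ⟨⟨i, hi.2⟩, hi.1, rfl⟩⟩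
  rw [← this, prod_map]
  rfl

/-- Cut `c` lies between the 0-based modes `c - 1` and `c`; the middle mode `P` is the paper's
`p - 1`. -/
def modeWindow (P : Fin d) (c : ℕ) : Finset (Fin d) :=
  if c ≤ P then prefixModes d c else suffixModes d c

theorem ne_of_mem_modeWindow {P k : Fin d} {c : ℕ} (hk : k ∈ modeWindow P c) : k ≠ P := by
  rintro rfl
  unfold modeWindow at hk
  split_ifs at hk <;> simp [prefixModes, suffixModes] at hk <;> omega

end Modes

section FastTT

variable {d : ℕ} {n : ℕ → ℕ}

abbrev PartialIndex (d : ℕ) (n : ℕ → ℕ) := (k : Fin d) → Option (Fin (n k))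

variable (A : ((k : Fin d) → Fin (n k)) → ℝ) (P : Fin d)

noncomputable def nonzeroEntries : Finset ((k : Fin d) → Fin (n k)) :=
  univ.filter fun idx => A idx ≠ 0

noncomputable def fastTTStates (c : ℕ) : Finset (PartialIndex d n) :=
  (nonzeroEntries A).image (partialOn (modeWindow P c))

noncomputable def fastTTCore (k : Fin d) (i : Fin (n k)) (s s' : PartialIndex d n) : ℝ :=
  if k < P then (if s' = update s k (some i) then 1 else 0)
  else if k = P then
    ∑ idx ∈ univ.filter (fun idx => partialOn (prefixModes d k) idx = s ∧ idx k = i ∧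
      partialOn (suffixModes d (k + 1)) idx = s'), A idx
  else (if s = update s' k (some i) then 1 else 0)

noncomputable def fastTTStep (idx : (k : Fin d) → Fin (n k)) (c : ℕ) :
    PartialIndex d n → PartialIndex d n → ℝ :=
  if h : c < d then fastTTCore A P ⟨c, h⟩ (idx ⟨c, h⟩) else 0

theorem fastTTStates_of_le {c : ℕ} (hc : c ≤ P) :
    fastTTStates A P c = (nonzeroEntries A).image (partialOn (prefixModes d c)) := by
  rw [fastTTStates, modeWindow, if_pos hc]

theorem fastTTStates_of_lt {c : ℕ} (hc : P < c) :
    fastTTStates A P c = (nonzeroEntries A).image (partialOn (suffixModes d c)) := by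
  rw [fastTTStates, modeWindow, if_neg (by omega)]

theorem fastTTStates_zero (hA : (nonzeroEntries A).Nonempty) :
    fastTTStates A P 0 = {fun _ => none} := by
  rw [fastTTStates_of_le A P (Nat.zero_le _), prefixModes_zero, partialOn_empty]
  exact image_const hA _

theorem fastTTStates_self (hA : (nonzeroEntries A).Nonempty) :
    fastTTStates A P d = {fun _ => none} := by
  rw [fastTTStates_of_lt A P P.isLt, suffixModes_self, partialOn_empty]
  exact image_const hA _

theorem sum_filter_eq_zero_of_notMem_image {τ : Type*} [DecidableEq τ]
    {g : ((k : Fin d) → Fin (n k)) → τ} {u : τ} (hu : u ∉ (nonzeroEntries A).image g)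
    (Q : ((k : Fin d) → Fin (n k)) → Prop) [DecidablePred Q] (hQ : ∀ idx, Q idx → g idx = u) :
    ∑ idx ∈ univ.filter Q, A idx = 0 := by
  refine sum_eq_zero fun idx hidx => ?_
  by_contra hA
  exact hu (mem_image.2 ⟨idx, by simpa [nonzeroEntries] using hA,
    hQ idx (mem_filter.1 hidx).2⟩)

section Chain

variable (idx : (k : Fin d) → Fin (n k))

local notation "w" => stateChain (fastTTStates A P) (fastTTStep A P idx) (fun _ => none)

theorem stateChain_fastTT_of_le :
    ∀ c ≤ P.val, ∀ s ∈ fastTTStates A P c,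
      w c s = if s = partialOn (prefixModes d c) idx then 1 else 0
  | 0, _, s, _ => by simp [stateChain]
  | c + 1, hc, s, hs => by
    have hcd : c < d := by omega
    let k : Fin d := ⟨c, hcd⟩
    have hkP : k < P := Fin.lt_def.2 (by simp only [k]; omega)
    have hstep : ∀ t, fastTTStep A P idx c t s =
        if s = update t k (some (idx k)) then 1 else 0 := by
      intro t
      rw [fastTTStep, dif_pos hcd]
      exact if_pos hkP
    have hprefix : partialOn (prefixModes d (c + 1)) idx =
        update (partialOn (prefixModes d c) idx) k (some (idx k)) :=
      (prefixModes_succ k).symm ▸ partialOn_insert k _ idx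
    rw [stateChain, sum_congr rfl fun t ht => by
      rw [stateChain_fastTT_of_le c (by omega) t ht, hstep]]
    simp only [ite_mul, one_mul, zero_mul, sum_ite_eq', ← hprefix]
    by_cases hmem : partialOn (prefixModes d c) idx ∈ fastTTStates A P c
    · rw [if_pos hmem]
    · rw [if_neg hmem, if_neg]
      rintro rfl
      rw [fastTTStates_of_le A P hc] at hs
      rw [fastTTStates_of_le A P (by omega)] at hmem
      exact hmem (partialOn_mem_image_of_subset (fun j hj => by
        simp only [prefixModes, mem_filter, mem_univ, true_and] at hj ⊢; omega) hs)

theorem stateChain_fastTT_of_lt {c : ℕ} (hPc : P.val < c) (hcd : c ≤ d) :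
    ∀ s ∈ fastTTStates A P c, w c s = ∑ idx' ∈ univ.filter (fun idx' =>
      partialOn (prefixModes d c) idx' = partialOn (prefixModes d c) idx ∧
        partialOn (suffixModes d c) idx' = s), A idx' := by
  induction c, hPc using Nat.le_induction with
  | base =>
    intro s _
    have hstep : ∀ t, fastTTStep A P idx P t s = ∑ idx' ∈ univ.filter (fun idx' =>
        partialOn (prefixModes d P) idx' = t ∧ idx' P = idx P ∧
          partialOn (suffixModes d (P + 1)) idx' = s), A idx' := by
      intro t
      rw [fastTTStep, dif_pos P.isLt, Fin.eta, fastTTCore, if_neg (lt_irrefl P), if_pos rfl]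
    rw [stateChain, sum_congr rfl fun t ht => by
      rw [stateChain_fastTT_of_le A P idx P le_rfl t ht, hstep]]
    simp only [ite_mul, one_mul, zero_mul, sum_ite_eq']
    have hfilter : ∀ idx', (partialOn (prefixModes d (P + 1)) idx' =
          partialOn (prefixModes d (P + 1)) idx ∧ partialOn (suffixModes d (P + 1)) idx' = s) ↔
        (partialOn (prefixModes d P) idx' = partialOn (prefixModes d P) idx ∧ idx' P = idx P ∧
          partialOn (suffixModes d (P + 1)) idx' = s) := by
      intro idx'
      rw [prefixModes_succ, partialOn_insert_eq_partialOn_insert_iff, and_assoc]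
    rw [filter_congr fun idx' _ => hfilter idx']
    split_ifs with hmem
    · rfl
    · rw [fastTTStates_of_le A P le_rfl] at hmem
      exact (sum_filter_eq_zero_of_notMem_image A hmem _ fun _ h => h.1).symm
  | succ c hPc ih =>
    intro s hs
    have hcd' : c < d := by omega
    let k : Fin d := ⟨c, hcd'⟩
    have hPk : P < k := Fin.lt_def.2 hPc
    have hstep : ∀ t, fastTTStep A P idx c t s =
        if t = update s k (some (idx k)) then 1 else 0 := by
      intro t
      rw [fastTTStep, dif_pos hcd']
      exact (if_neg (lt_asymm hPk)).trans (if_neg hPk.ne')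
    have hsk : s k = none := by
      rw [fastTTStates_of_lt A P (by omega)] at hs
      obtain ⟨j, _, rfl⟩ := mem_image.1 hs
      simp [partialOn, suffixModes, k]
    have hfilter : ∀ idx', (partialOn (prefixModes d (c + 1)) idx' =
          partialOn (prefixModes d (c + 1)) idx ∧ partialOn (suffixModes d (c + 1)) idx' = s) ↔
        (partialOn (prefixModes d c) idx' = partialOn (prefixModes d c) idx ∧
          partialOn (suffixModes d c) idx' = update s k (some (idx k))) := by
      intro idx'
      rw [show c = (k : ℕ) from rfl, prefixModes_succ, partialOn_insert_eq_partialOn_insert_iff,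
        suffixModes_eq_insert, partialOn_insert_eq_update_iff (by simp [suffixModes]) hsk,
        and_assoc]
    rw [stateChain, sum_congr rfl fun t _ => by rw [hstep]]
    simp only [mul_ite, mul_one, mul_zero, sum_ite_eq']
    rw [filter_congr fun idx' _ => hfilter idx']
    split_ifs with hmem
    · exact ih (by omega) _ hmem
    · rw [fastTTStates_of_lt A P hPc] at hmem
      exact (sum_filter_eq_zero_of_notMem_image A hmem _ fun _ h => h.2).symm

theorem stateChain_fastTT_self (hA : (nonzeroEntries A).Nonempty) :
    w d (fun _ => none) = A idx := by
  have hfilter : ∀ idx', (partialOn (prefixModes d d) idx' = partialOn (prefixModes d d) idx ∧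
      partialOn (suffixModes d d) idx' = fun _ => none) ↔ idx' = idx := by
    intro idx'
    simp only [prefixModes_self, suffixModes_self, partialOn_empty, and_true]
    rw [partialOn_eq_partialOn_iff, funext_iff]
    simp only [mem_univ, forall_const]
  rw [stateChain_fastTT_of_lt A P idx P.isLt le_rfl _ (by simp [fastTTStates_self A P hA]),
    filter_congr fun idx' _ => hfilter idx', filter_eq', if_pos (mem_univ _), sum_singleton]

end Chain

theorem exists_ttChain_eq_of_nonempty (hA : (nonzeroEntries A).Nonempty) :
    ∃ G : (k : Fin d) → Fin (n k) → ℕ → ℕ → ℝ, ∀ idx : (k : Fin d) → Fin (n k),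
      A idx = ttChain (fun k a b => if h : k < d then G ⟨k, h⟩ (idx ⟨k, h⟩) a b else 0)
        (fun c => (fastTTStates A P c).card) d 0 0 := by
  let T := fastTTStates A P
  refine ⟨fun k i x y => fastTTCore A P k i ((T k).enum (fun _ => none) x)
    ((T (k + 1)).enum (fun _ => none) y), fun idx => ?_⟩
  have hT : T d = {fun _ => none} := fastTTStates_self A P hA
  have henum : (T d).enum (fun _ => none) 0 = fun _ => none :=
    mem_singleton.1 (hT ▸ (T d).enum_mem _ (by simp [hT]))
  rw [ttChain_eq_stateChain T (fastTTStep A P idx) (fastTTStates_zero A P hA) _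
    (fun c x y => by unfold fastTTStep; split_ifs <;> rfl) d 0 (by simp [hT]), henum,
    stateChain_fastTT_self A P idx hA]

theorem card_fastTTStates_le_card_fibers (c : ℕ) :
    (fastTTStates A P c).card ≤
      ((nonzeroEntries A).image fun idx (k : {k : Fin d // k ≠ P}) => idx k).card :=
  card_image_partialOn_le_card_image_restrict _ (· ≠ P) fun _ => ne_of_mem_modeWindow

theorem card_fastTTStates_le_prod_range {c : ℕ} (hc : c ≤ P) :
    (fastTTStates A P c).card ≤ ∏ i ∈ range c, n i := by
  rw [fastTTStates_of_le A P hc, ← prod_prefixModes n (hc.trans P.isLt.le)]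
  simpa only [Fintype.card_fin] using
    card_image_partialOn_le_prod (β := fun k : Fin d => Fin (n k)) _ _

theorem card_fastTTStates_le_prod_Ico {c : ℕ} (hc : P < c) :
    (fastTTStates A P c).card ≤ ∏ i ∈ Ico c d, n i := by
  rw [fastTTStates_of_lt A P hc, ← prod_suffixModes n]
  simpa only [Fintype.card_fin] using
    card_image_partialOn_le_prod (β := fun k : Fin d => Fin (n k)) _ _

theorem glue_restrict (idx : (k : Fin d) → Fin (n k)) :
    glue n P (fun k => idx k.1) (idx P) = idx := by
  funext k
  by_cases h : k = P
  · subst h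
    simp [glue]
  · simp [glue, h]

open Classical in
theorem filter_exists_glue_ne_zero_eq_image :
    univ.filter (fun j : (k : {k : Fin d // k ≠ P}) → Fin (n k.1.val) =>
      ∃ t : Fin (n P.val), A (glue n P j t) ≠ 0) =
        (nonzeroEntries A).image fun idx (k : {k : Fin d // k ≠ P}) => idx k.1 := by
  ext j
  simp only [mem_filter, mem_univ, true_and, mem_image, nonzeroEntries]
  constructor
  · rintro ⟨t, ht⟩
    exact ⟨glue n P j t, ht, funext fun k => by simp [glue, k.2]⟩
  · rintro ⟨idx, hidx, rfl⟩
    exact ⟨idx P, by rwa [glue_restrict]⟩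

end FastTT

open Classical in
/-- Upper bound on the TT ranks after parallel-vector rounding:
a tensor `A ∈ ℝ^{n₁×⋯×n_d}` with `R` nonzero `p`-fibers (`p` 1-based, `1 ≤ p ≤ d`)
admits an exact TT representation with ranks `r̃₀ = r̃_d = 1` satisfying
`r̃_k ≤ min(R, ∏_{i=1}^k n_i)` for `1 ≤ k < p` and
`r̃_k ≤ min(R, ∏_{i=k+1}^d n_i)` for `p ≤ k < d`. -/
theorem fastTT_rank_upper_bound
    (d : ℕ) (n : ℕ → ℕ) (p : ℕ) (hp : 1 ≤ p) (hpd : p ≤ d)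
    (A : ((k : Fin d) → Fin (n k.val)) → ℝ)
    (R : ℕ)
    (hR : R = (Finset.univ.filter
      (fun j : (k : {k : Fin d // k ≠ (⟨p - 1, by omega⟩ : Fin d)}) →
          Fin (n k.1.val) =>
        ∃ (t : Fin (n (⟨p - 1, by omega⟩ : Fin d).val)), A (glue n (⟨p - 1, by omega⟩ : Fin d) j t) ≠ 0)).card) :
    ∃ (r : ℕ → ℕ) (G : (k : Fin d) → Fin (n k.val) → ℕ → ℕ → ℝ),
      r 0 = 1 ∧ r d = 1 ∧
      (∀ idx : (k : Fin d) → Fin (n k.val),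
        A idx = ttChain
          (fun k a b => if h : k < d then G ⟨k, h⟩ (idx ⟨k, h⟩) a b else 0)
          r d 0 0) ∧
      (∀ k, 1 ≤ k → k < p → r k ≤ min R (∏ i ∈ Finset.range k, n i)) ∧
      (∀ k, p ≤ k → k < d → r k ≤ min R (∏ i ∈ Finset.Ico k d, n i)) := by
  set P : Fin d := ⟨p - 1, by omega⟩
  rw [filter_exists_glue_ne_zero_eq_image] at hR
  rcases (nonzeroEntries A).eq_empty_or_nonempty with hA | hA
  · have hA0 : ∀ idx, A idx = 0 := fun idx => by
      simpa [nonzeroEntries] using (eq_empty_iff_forall_notMem.1 hA idx)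
    refine ⟨fun c => if c = 0 ∨ c = d then 1 else 0, fun _ _ _ _ => 0, by simp, by simp,
      fun idx => ?_, fun k hk _ => ?_, fun k hk hkd => ?_⟩
    · simpa [hA0] using (ttChain_zero _ (by omega) 0 0).symm
    all_goals exact (if_neg (by omega)).trans_le (Nat.zero_le _)
  · obtain ⟨G, hG⟩ := exists_ttChain_eq_of_nonempty A P hA
    refine ⟨fun c => (fastTTStates A P c).card, G, by simp [fastTTStates_zero A P hA],
      by simp [fastTTStates_self A P hA], hG, fun k _ hk => le_min ?_ ?_,
      fun k hk hkd => le_min ?_ ?_⟩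
    · exact hR ▸ card_fastTTStates_le_card_fibers A P k
    · exact card_fastTTStates_le_prod_range A P (by simp [P]; omega)
    · exact hR ▸ card_fastTTStates_le_card_fibers A P k
    · exact card_fastTTStates_le_prod_Ico A P (by simp [P]; omega)
end

section
/- If T ∈ ℝ^{R×R} is a quasi-permutation matrix and P is a 3-way core whose 1-unfolding has the block structure where each row-slice is supported on a diagonal pattern (i.e., spl₁(P) has the form [X₁E | X₂E | ⋯] with each block diagonal times a basis pattern as arising from the fiber-based TT construction), then the 2-unfolding of the core Ṗ defined by spl₁(Ṗ) = T·spl₁(P) is again a quasi-permutation matrix. -/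
/-! Since the slices of `P` are diagonal, `(T * P i) a b = T a b * P i b b`: the 2-unfolding of
`Ṗ` is the column-wise Kronecker (Khatri–Rao) product of `T` with the matrix `(i, b) ↦ P i b b`,
and this product of two quasi-permutation matrices is again one, column `b` being
`e_{a₀} ⊗ e_{i₀}`. -/

open Matrix

def khatriRao {I K J α : Type*} [Mul α] (M : Matrix I J α) (N : Matrix K J α) :
    Matrix (I × K) J α :=
  of fun ik j => M ik.1 j * N ik.2 j

theorem IsQuasiPerm.khatriRao {I K J : Type*} [DecidableEq I] [DecidableEq K]
    {M : Matrix I J ℝ} {N : Matrix K J ℝ} (hM : IsQuasiPerm M) (hN : IsQuasiPerm N) :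
    IsQuasiPerm (khatriRao M N) := by
  intro j
  obtain ⟨i₀, hi⟩ := hM j
  obtain ⟨k₀, hk⟩ := hN j
  refine ⟨(i₀, k₀), fun ⟨i, k⟩ => ?_⟩
  simp only [_root_.khatriRao, of_apply, hi, hk, ite_zero_mul_ite_zero, one_mul, Prod.mk.injEq]

theorem mul_apply_of_isDiag {n α : Type*} [Fintype n] [DecidableEq n]
    [NonUnitalNonAssocSemiring α] {D : Matrix n n α} (hD : D.IsDiag) (T : Matrix n n α)
    (a b : n) : (T * D) a b = T a b * D b b := by
  conv_lhs => rw [← hD.diagonal_diag, mul_diagonal]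
  rfl

/-- In the fiber-based TT construction, a core
`P ∈ {0,1}^{R×n×R}` (given by its slices `P i`, `i < n`) has diagonal slices and,
for every `j`, the diagonal vector `i ↦ P i j j` is a standard basis vector of
`ℝⁿ`.  If `T ∈ ℝ^{R×R}` is a quasi-permutation matrix, then the 2-unfolding of
the core `Ṗ` defined by `spl₁(Ṗ) = T·spl₁(P)` (slice-wise, `Ṗ i = T * P i`)
is again a quasi-permutation matrix. -/
theorem transfer_preserves_quasi_perm_unfolding
    (R nmode : ℕ)
    (P : Fin nmode → Matrix (Fin R) (Fin R) ℝ)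
    -- each slice of P is diagonal
    (hdiag : ∀ i a b, a ≠ b → P i a b = 0)
    -- the diagonal of P along the mode index is a standard basis vector
    (hbasis : ∀ j : Fin R, ∃ i₀, ∀ i, P i j j = if i = i₀ then (1 : ℝ) else 0)
    (T : Matrix (Fin R) (Fin R) ℝ) (hT : IsQuasiPerm T) :
    -- the 2-unfolding of Ṗ, the (R·n)×R matrix with rows (a, i) and entries (T * P i) a b
    IsQuasiPerm (Matrix.of fun ai : Fin R × Fin nmode => fun b : Fin R =>
      (T * P ai.2) ai.1 b) := by
  have hunfold : (of fun ai : Fin R × Fin nmode => fun b : Fin R => (T * P ai.2) ai.1 b) =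
      khatriRao T (of fun i j => P i j j) := by
    ext ⟨a, i⟩ b
    exact mul_apply_of_isDiag (hdiag i) T a b
  rw [hunfold]
  exact hT.khatriRao hbasis
end
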